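/- Let μ be an atomless probability measure on ℝ, let Y_1,…,Y_N be i.i.d. random variables with law μ, let k be a natural number with k < N, and let Y_{(N−k)} denote the (N−k)-th order statistic of Y_1,…,Y_N. Then the expected coverage satisfies E[μ((−∞, Y_{(N−k)}])] = (N−k)/(N+1), where the expectation is taken under the product measure μ^⊗N. -/

import Mathlib

open MeasureTheory Finset

/-- The `(N-k)`-th order statistic (1-indexed) of `y : Fin N → ℝ`: the value in
position `N-k` when `y₁, …, y_N` are sorted in nondecreasing order (counting
multiplicity). -/
noncomputable def orderStat {N : ℕ} (k : ℕ) (y : Fin N → ℝ) : ℝ :=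
  ((Multiset.map y Finset.univ.val).sort (· ≤ ·)).getD (N - k - 1) 0

/-!
Adjoin a fresh sample `Y₀ ~ μ`. By Fubini the expected coverage is `P(Y₀ ≤ Y_(N-k))`, and
`Y₀ ≤ Y_(N-k)` holds iff fewer than `N - k` of the `Yᵢ` lie strictly below `Y₀`, i.e. iff the
rank of `Y₀` among the `N + 1` samples is `< N - k`. As `μ` is atomless the samples are a.s.
distinct, so their ranks are a permutation of `{0, …, N}` and exactly `m` of them are `< m`;
by exchangeability all samples have rank `< m` with the same probability, which is therefore
`m / (N + 1)`.
-/

open ProbabilityTheory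
open scoped ENNReal

theorem List.SortedLE.le_getElem_iff_countP_le {α : Type*} [LinearOrder α] {l : List α}
    (hl : l.SortedLE) {d : ℕ} (hd : d < l.length) (t : α) :
    t ≤ l[d] ↔ l.countP (· < t) ≤ d := by
  have hsplit : l = l.take d ++ l[d] :: l.drop (d + 1) := by
    rw [← List.drop_eq_getElem_cons, List.take_append_drop]
  have hpw := hl.pairwise
  rw [hsplit, List.pairwise_append, List.pairwise_cons] at hpw
  obtain ⟨-, ⟨hdrop, -⟩, htake⟩ := hpw
  have hlen : (l.take d).length = d := List.length_take_of_le hd.le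
  conv_rhs => rw [hsplit, List.countP_append, List.countP_cons]
  constructor
  · intro ht
    have hzero : (l.drop (d + 1)).countP (· < t) = 0 :=
      List.countP_eq_zero.2 fun b hb => by simpa using ht.trans (hdrop b hb)
    have := (l.take d).countP_le_length (p := (· < t))
    simp only [not_lt.2 ht, hzero, decide_false, Bool.false_eq_true, ↓reduceIte]
    omega
  · intro hcount
    by_contra! ht
    have hall : (l.take d).countP (· < t) = (l.take d).length :=
      List.countP_eq_length.2 fun a ha => by
        simpa using (htake a ha l[d] List.mem_cons_self).trans_lt ht
    simp only [ht, hall, hlen, decide_true, ↓reduceIte] at hcount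
    omega

theorem le_orderStat_iff {N k : ℕ} (hk : k < N) (y : Fin N → ℝ) (t : ℝ) :
    t ≤ orderStat k y ↔ #{i | y i < t} < N - k := by
  rw [orderStat]
  set l := (Multiset.map y univ.val).sort (· ≤ ·)
  have hlen : l.length = N := by simp [l]
  have hcount : l.countP (· < t) = #{i | y i < t} := by
    rw [← Multiset.coe_countP, Multiset.sort_eq, Multiset.countP_map]
    rfl
  rw [List.getD_eq_getElem _ _ (by omega),
    (Multiset.pairwise_sort _ _).sortedLE.le_getElem_iff_countP_le, hcount]
  omega

section Rank

variable {ι α : Type*} [Fintype ι] [LinearOrder α]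

def rank (w : ι → α) (i : ι) : ℕ := #{j | w j < w i}

theorem rank_lt_rank {w : ι → α} {i j : ι} (h : w i < w j) : rank w i < rank w j := by
  refine card_lt_card <| (ssubset_iff_of_subset fun a ha => ?_).2 ⟨i, ?_⟩
  · simp only [mem_filter, mem_univ, true_and] at ha ⊢
    exact ha.trans h
  · simpa using h

theorem rank_lt_card (w : ι → α) (i : ι) : rank w i < Fintype.card ι :=
  card_lt_card <| filter_ssubset.2 ⟨i, mem_univ i, lt_irrefl _⟩

theorem rank_injective {w : ι → α} (hw : Function.Injective w) : Function.Injective (rank w) := by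
  intro i j hij
  by_contra hne
  rcases (hw.ne hne).lt_or_gt with h | h
  · exact (rank_lt_rank h).ne hij
  · exact (rank_lt_rank h).ne' hij

theorem image_rank {w : ι → α} (hw : Function.Injective w) :
    univ.image (rank w) = range (Fintype.card ι) :=
  eq_of_subset_of_card_le (fun _ h => by
      obtain ⟨i, -, rfl⟩ := mem_image.1 h
      exact mem_range.2 (rank_lt_card w i))
    (by rw [card_image_of_injective _ (rank_injective hw), card_range, card_univ])

theorem card_rank_lt {w : ι → α} (hw : Function.Injective w) {m : ℕ}
    (hm : m ≤ Fintype.card ι) : #{i | rank w i < m} = m := by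
  rw [← card_image_of_injective _ (rank_injective hw), ← filter_image (p := (· < m)),
    image_rank hw, show (range (Fintype.card ι)).filter (· < m) = range m by
      ext; simp only [mem_filter, mem_range]; omega, card_range]

theorem rank_comp_perm (w : ι → α) (σ : Equiv.Perm ι) (i : ι) :
    rank (w ∘ σ) i = rank w (σ i) :=
  card_equiv σ fun j => by simp

theorem rank_zero {n : ℕ} (w : Fin (n + 1) → α) : rank w 0 = #{i | Fin.tail w i < w 0} := by
  rw [rank, Fin.univ_succ, filter_cons_of_neg (fun j => w j < w 0) _ _ _ (lt_irrefl _),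
    filter_map, card_map]
  rfl

end Rank

section ProductMeasure

variable {ι : Type*} [Fintype ι]

theorem measurable_card_filter {Ω : Type*} [MeasurableSpace Ω] {p : ι → Ω → Prop}
    [∀ i x, Decidable (p i x)] (hp : ∀ i, MeasurableSet {x | p i x}) :
    Measurable fun x => #{i | p i x} := by
  simp_rw [card_filter]
  exact Finset.measurable_sum _ fun i _ => Measurable.ite (hp i) measurable_const measurable_const

theorem measurable_rank (i : ι) : Measurable fun w : ι → ℝ => rank w i :=
  measurable_card_filter fun j => measurableSet_lt (measurable_pi_apply j) (measurable_pi_apply i)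

theorem measurePreserving_comp_perm {α : Type*} [MeasurableSpace α] (μ : Measure α)
    [SigmaFinite μ] (σ : Equiv.Perm ι) :
    MeasurePreserving (fun w : ι → α => w ∘ σ) (Measure.pi fun _ => μ) (Measure.pi fun _ => μ) := by
  convert measurePreserving_piCongrLeft (fun _ : ι => μ) σ.symm
  ext i
  obtain ⟨j, rfl⟩ := σ.symm.surjective i
  rw [MeasurableEquiv.coe_piCongrLeft, Equiv.piCongrLeft_apply_apply]
  simp

variable (μ : Measure ℝ) [IsProbabilityMeasure μ] [NullSingletonClass μ]

theorem measure_pi_apply_eq_apply_eq_zero {i j : ι} (hij : i ≠ j) :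
    Measure.pi (fun _ : ι => μ) {w | w i = w j} = 0 := by
  have hind : IndepFun (fun w : ι → ℝ => w i) (fun w => w j) (Measure.pi fun _ => μ) :=
    (iIndepFun_pi (X := fun _ => id) fun _ => aemeasurable_id).indepFun hij
  have hlaw := hind.map_prod_eq_prod_map_map (measurable_pi_apply i).aemeasurable
    (measurable_pi_apply j).aemeasurable
  rw [(measurePreserving_eval _ i).map_eq, (measurePreserving_eval _ j).map_eq] at hlaw
  have hdiag : {w : ι → ℝ | w i = w j} = (fun w => (w i, w j)) ⁻¹' Set.diagonal ℝ := rfl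
  rw [hdiag, ← Measure.map_apply (by fun_prop) measurableSet_diagonal, hlaw,
    Measure.prod_apply measurableSet_diagonal]
  simp only [Set.preimage, Set.mem_diagonal_iff, Set.ofPred_eq_eq_singleton', measure_singleton,
    lintegral_zero]

theorem ae_injective_pi : ∀ᵐ w ∂(Measure.pi fun _ : ι => μ), Function.Injective w := by
  have hpair : ∀ i j, ∀ᵐ w ∂(Measure.pi fun _ : ι => μ), w i = w j → i = j := fun i j => by
    by_cases hij : i = j
    · exact ae_of_all _ fun _ _ => hij
    · filter_upwards [measure_eq_zero_iff_ae_notMem.1 (measure_pi_apply_eq_apply_eq_zero μ hij)]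
        with w hw h using (hw h).elim
  filter_upwards [ae_all_iff.2 fun i => ae_all_iff.2 (hpair i)] with w hw i j using hw i j

theorem measure_pi_rank_lt (i : ι) {m : ℕ} (hm : m ≤ Fintype.card ι) :
    Measure.pi (fun _ : ι => μ) {w | rank w i < m} = m / Fintype.card ι := by
  classical
  set π := Measure.pi fun _ : ι => μ
  have hA : ∀ j, MeasurableSet {w : ι → ℝ | rank w j < m} := fun j =>
    measurable_rank j measurableSet_Iio
  have hexch : ∀ j, π {w | rank w j < m} = π {w | rank w i < m} := fun j => by
    have := (measurePreserving_comp_perm μ (Equiv.swap i j)).measure_preimage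
      (hA i).nullMeasurableSet
    simpa [rank_comp_perm] using this
  have hsum : ∑ j, π {w | rank w j < m} = m := calc
    ∑ j, π {w | rank w j < m} = ∫⁻ w, ∑ j, {w | rank w j < m}.indicator 1 w ∂π := by
      rw [lintegral_finsetSum _ fun j _ => measurable_one.indicator (hA j)]
      simp [lintegral_indicator_one (hA _)]
    _ = ∫⁻ w, (#{j | rank w j < m} : ℝ≥0∞) ∂π := by simp [Set.indicator_apply, sum_boole]
    _ = ∫⁻ _, (m : ℝ≥0∞) ∂π :=
      lintegral_congr_ae ((ae_injective_pi μ).mono fun w hw => by simp only [card_rank_lt hw hm])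
    _ = m := by simp
  rw [sum_congr rfl fun j _ => hexch j, sum_const, card_univ, nsmul_eq_mul] at hsum
  rw [ENNReal.eq_div_iff (by simpa using (Fintype.card_pos_iff.2 ⟨i⟩).ne') (by simp), hsum]

end ProductMeasure

theorem measurable_orderStat {N k : ℕ} (hk : k < N) :
    Measurable (orderStat k : (Fin N → ℝ) → ℝ) := by
  refine measurable_of_Ici fun t => ?_
  have hpre : orderStat k ⁻¹' Set.Ici t = {y : Fin N → ℝ | #{i | y i < t} < N - k} :=
    Set.ext fun y => le_orderStat_iff hk y t
  rw [hpre]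
  exact measurable_card_filter (fun i => measurableSet_lt (measurable_pi_apply i) measurable_const)
    measurableSet_Iio

theorem lintegral_measure_Iic_orderStat (μ : Measure ℝ) [IsProbabilityMeasure μ]
    [NullSingletonClass μ] {N k : ℕ} (hk : k < N) :
    ∫⁻ y, μ (Set.Iic (orderStat k y)) ∂(Measure.pi fun _ : Fin N => μ)
      = (N - k : ℕ) / (N + 1 : ℕ) := by
  have hS : MeasurableSet {p : ℝ × (Fin N → ℝ) | p.1 ≤ orderStat k p.2} :=
    measurableSet_le measurable_fst ((measurable_orderStat hk).comp measurable_snd)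
  have hsplit := measurePreserving_piFinSuccAbove (fun _ : Fin (N + 1) => μ) 0
  calc ∫⁻ y, μ (Set.Iic (orderStat k y)) ∂(Measure.pi fun _ : Fin N => μ)
      = (μ.prod (Measure.pi fun _ : Fin N => μ)) {p | p.1 ≤ orderStat k p.2} :=
        (Measure.prod_apply_symm hS).symm
    _ = Measure.pi (fun _ : Fin (N + 1) => μ) {w | rank w 0 < N - k} := by
        rw [← hsplit.measure_preimage hS.nullMeasurableSet]
        congr 1
        ext w
        simp [rank_zero, le_orderStat_iff hk]
    _ = (N - k : ℕ) / (N + 1 : ℕ) := by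
        rw [measure_pi_rank_lt μ 0 (by rw [Fintype.card_fin]; omega), Fintype.card_fin]

/-- for `N` i.i.d. samples from an atomless probability measure
`μ` on `ℝ`, the expected coverage of the conformal prediction set satisfies
`E[μ((-∞, Y_{(N-k)}])] = (N-k)/(N+1)`, the mean of `Beta(N-k, k+1)`. -/
theorem expected_conformal_coverage (μ : Measure ℝ) [IsProbabilityMeasure μ]
    [NullSingletonClass μ] (N k : ℕ) (hk : k < N) :
    ∫ Y, (μ (Set.Iic (orderStat k Y))).toReal
        ∂(Measure.pi (fun _ : Fin N => μ))
      = ((N : ℝ) - k) / ((N : ℝ) + 1) := by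
  have hmeas : Measurable fun Y : Fin N → ℝ => μ (Set.Iic (orderStat k Y)) :=
    (Monotone.measurable fun _ _ h => measure_mono (Set.Iic_subset_Iic.2 h)).comp
      (measurable_orderStat hk)
  rw [integral_toReal hmeas.aemeasurable (ae_of_all _ fun _ => measure_lt_top _ _),
    lintegral_measure_Iic_orderStat μ hk, ENNReal.toReal_div, ENNReal.toReal_natCast,
    ENNReal.toReal_natCast]
  simp [Nat.cast_sub hk.le]
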